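/- arXiv:2308.04315 — 5 statements merged into one kernel-verified Lean document; each statement's English description precedes it below -/
import Mathlib

section
/- Let 0 < N < 1 and b1, L > 0. Then the quantity I = (b1 L^2 / 4) * ((N-1)/2 + sqrt(1-N) - N * log(1 + sqrt(1-N))) is strictly positive. -/
theorem stmt_0 (N b1 L : ℝ) (hN0 : 0 < N) (hN1 : N < 1) (hb1 : 0 < b1) (hL : 0 < L) :
    0 < b1 * L ^ 2 / 4 *
      ((N - 1) / 2 + Real.sqrt (1 - N) - N * Real.log (1 + Real.sqrt (1 - N))) := by
  set s := Real.sqrt (1 - N) with hs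
  have h1N : (0:ℝ) < 1 - N := by linarith
  have hs0 : 0 < s := Real.sqrt_pos.mpr h1N
  have hs1 : s < 1 := by
    have h := Real.sqrt_lt_sqrt (le_of_lt h1N) (show 1 - N < 1 by linarith)
    simpa using h
  have hsq : s ^ 2 = 1 - N := Real.sq_sqrt (le_of_lt h1N)
  have h1s : (0:ℝ) < 1 + s := by linarith
  have hlog : Real.log (1 + s) < ((1 + s) - (1 + s)⁻¹) / 2 := by
    have hl0 : 0 < Real.log (1 + s) := Real.log_pos (by linarith)
    have := Real.self_lt_sinh_iff.mpr hl0
    rwa [Real.sinh_eq, Real.exp_log h1s, Real.exp_neg, Real.exp_log h1s] at this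
  have key : (N - 1) / 2 + s - N * Real.log (1 + s) > 0 := by
    have h2 : N * Real.log (1 + s) < N * (((1 + s) - (1 + s)⁻¹) / 2) :=
      (mul_lt_mul_iff_right₀ hN0).mpr hlog
    have h3 : (N - 1) / 2 + s - N * (((1 + s) - (1 + s)⁻¹) / 2) = s ^ 3 / 2 := by
      have hne : (1 + s) ≠ 0 := ne_of_gt h1s
      field_simp
      nlinarith [hsq, sq_nonneg s, sq_nonneg (1+s)]
    nlinarith [pow_pos hs0 3]
  have hpos : 0 < b1 * L ^ 2 / 4 := by positivity
  exact mul_pos hpos key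
end

section
/- For every N in the open interval (0,1), one has N/2 + sqrt(1-N) - N * log(1 + sqrt(1-N)) >= 1/2. -/
lemma cubic_hasDeriv (x : ℝ) (h1 : (1:ℝ) + x ≠ 0) :
    HasDerivAt (fun y : ℝ => y - y ^ 2 / 2 + y ^ 3 / 3 - Real.log (1 + y))
      (1 - 2 * x / 2 + 3 * x ^ 2 / 3 - 1 / (1 + x)) x := by
  have hlog : HasDerivAt (fun y : ℝ => Real.log (1 + y)) (1 / (1 + x)) x := by
    have : HasDerivAt (fun y : ℝ => 1 + y) 1 x := by
      simpa using (hasDerivAt_id x).const_add 1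
    simpa using this.log h1
  have h2 : HasDerivAt (fun y : ℝ => y - y ^ 2 / 2 + y ^ 3 / 3)
      (1 - 2 * x / 2 + 3 * x ^ 2 / 3) x := by
    have := (((hasDerivAt_id x).sub (((hasDerivAt_pow 2 x)).div_const 2)).add
      (((hasDerivAt_pow 3 x)).div_const 3))
    simp at this ⊢
    exact this
  exact h2.sub hlog

lemma log_cubic_bound (s : ℝ) (hs : 0 ≤ s) :
    Real.log (1 + s) ≤ s - s ^ 2 / 2 + s ^ 3 / 3 := by
  have key : MonotoneOn (fun x : ℝ => x - x ^ 2 / 2 + x ^ 3 / 3 - Real.log (1 + x))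
      (Set.Ici (0 : ℝ)) := by
    apply monotoneOn_of_deriv_nonneg (convex_Ici 0)
    · apply ContinuousOn.sub
      · fun_prop
      · apply ContinuousOn.log (by fun_prop)
        intro x hx
        simp only [Set.mem_Ici] at hx
        positivity
    · intro x hx
      rw [interior_Ici] at hx
      simp only [Set.mem_Ioi] at hx
      exact (cubic_hasDeriv x (by positivity)).differentiableAt.differentiableWithinAt
    · intro x hx
      rw [interior_Ici] at hx
      simp only [Set.mem_Ioi] at hx
      have h1 : (1 : ℝ) + x ≠ 0 := by positivity
      rw [(cubic_hasDeriv x h1).deriv]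
      have : 1 - 2 * x / 2 + 3 * x ^ 2 / 3 - 1 / (1 + x) = x ^ 3 / (1 + x) := by
        field_simp
        ring
      rw [this]
      positivity
  have h0 : (0 : ℝ) ∈ Set.Ici (0 : ℝ) := Set.self_mem_Ici
  have := key h0 (Set.mem_Ici.2 hs) hs
  simp only [Real.log_one, add_zero] at this
  nlinarith [this]

theorem stmt_1 (N : ℝ) (hN0 : 0 < N) (hN1 : N < 1) :
    N / 2 + Real.sqrt (1 - N) - N * Real.log (1 + Real.sqrt (1 - N)) ≥ 1 / 2 := by
  set s := Real.sqrt (1 - N) with hsdef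
  have hs0 : 0 ≤ s := Real.sqrt_nonneg _
  have hs2 : s ^ 2 = 1 - N := Real.sq_sqrt (by linarith)
  have hlog := log_cubic_bound s hs0
  have hmul : N * Real.log (1 + s) ≤ N * (s - s ^ 2 / 2 + s ^ 3 / 3) :=
    mul_le_mul_of_nonneg_left hlog hN0.le
  have hs1 : s ≤ 1 := by nlinarith
  nlinarith [mul_nonneg (mul_nonneg hs0 hs0) hs0, sq_nonneg s, sq_nonneg (s - 1),
    mul_nonneg (mul_nonneg (mul_nonneg hs0 hs0) hs0) (sq_nonneg (s - 1))]
end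

section
/- Let N in (0,1), c >= 1, and let z = z_-(c) be the negative root of z^2 - ((c-1)/c) z + (N-1)/c = 0. Then for every real y, c - N * ((1-z)^2 - y^2) / ((1-z)^2 + y^2)^2 >= 1 - N. -/
theorem stmt_4 (N c z : ℝ) (hN0 : 0 < N) (hN1 : N < 1) (hc : 1 ≤ c)
    (hroot : z ^ 2 - ((c - 1) / c) * z + (N - 1) / c = 0) (hzneg : z < 0) :
    ∀ y : ℝ, c - N * ((1 - z) ^ 2 - y ^ 2) / ((1 - z) ^ 2 + y ^ 2) ^ 2 ≥ 1 - N := by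
  intro y
  have h1z : (0:ℝ) < 1 - z := by linarith
  have hA' : (0:ℝ) < (1 - z) ^ 2 := by positivity
  have hA : (0:ℝ) < (1 - z) ^ 2 + y ^ 2 := by positivity
  have hB : (0:ℝ) < ((1 - z) ^ 2 + y ^ 2) ^ 2 := by positivity
  have step1 : N ≤ (c - 1 + N) * (1 - z) ^ 2 := by nlinarith
  have key : N * ((1 - z) ^ 2 - y ^ 2) / ((1 - z) ^ 2 + y ^ 2) ^ 2 ≤ c - 1 + N := by
    rw [div_le_iff₀ hB]
    nlinarith [step1, sq_nonneg y, mul_nonneg hN0.le (sq_nonneg y),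
      mul_le_mul_of_nonneg_right step1 hA'.le,
      mul_le_mul_of_nonneg_right step1 (sq_nonneg y),
      mul_pos hA' hA, sq_nonneg (y^2)]
  linarith
end

section
/- Let b0, b1, a > 0 with b0 < b1, let beta : [0, infinity) -> R be continuous with b0 <= beta <= b1 everywhere and beta(u) = b1 for u >= a^2/2, set M = integral from 0 to infinity of (beta - b1) (assumed nonzero), N = 8|M|/(b1 L^2), and assume L > (2 + sqrt(6)) * a. Then the integral over v from (L-a)^2/2 to (L^2/8)(1 + sqrt(1-N))^2 of (1/v) * (integral from 0 to v of beta(u) du) dv is strictly less than 2 times the integral from 0 to L^2/8 of beta(u) du. -/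
open MeasureTheory

set_option maxHeartbeats 1000000 in
theorem stmt_12 (b0 b1 a L : ℝ) (beta : ℝ → ℝ)
    (hb0 : 0 < b0) (hb1 : 0 < b1) (hb01 : b0 < b1) (ha : 0 < a)
    (hcont : ContinuousOn beta (Set.Ici 0))
    (hlb : ∀ u, 0 ≤ u → b0 ≤ beta u) (hub : ∀ u, 0 ≤ u → beta u ≤ b1)
    (hconst : ∀ u, a ^ 2 / 2 ≤ u → beta u = b1)
    (M N : ℝ) (hM : M = ∫ u in Set.Ioi 0, (beta u - b1)) (hMne : M ≠ 0)
    (hN : N = 8 * |M| / (b1 * L ^ 2))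
    (hLa : L > (2 + Real.sqrt 6) * a) :
    (∫ v in ((L - a) ^ 2 / 2)..(L ^ 2 / 8 * (1 + Real.sqrt (1 - N)) ^ 2),
        (1 / v) * ∫ u in (0 : ℝ)..v, beta u) <
      2 * ∫ u in (0 : ℝ)..(L ^ 2 / 8), beta u := by
  -- basic positivity facts
  have hs6 : Real.sqrt 6 ^ 2 = 6 := Real.sq_sqrt (by norm_num)
  have hs6nn : (0:ℝ) ≤ Real.sqrt 6 := Real.sqrt_nonneg 6
  have hs6ge2 : (2:ℝ) ≤ Real.sqrt 6 := by nlinarith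
  have hL4a : 4 * a < L := by nlinarith
  have hL0 : 0 < L := by nlinarith
  set c : ℝ := a ^ 2 / 2 with hc
  have hc0 : 0 < c := by positivity
  -- continuous extension
  set beta' : ℝ → ℝ := fun u => beta (max u 0) with hbeta'
  have hcont' : Continuous beta' := by
    apply hcont.comp_continuous (continuous_id.max continuous_const)
    intro x; exact Set.mem_Ici.2 (le_max_right x 0)
  have hub' : ∀ u, beta' u ≤ b1 := fun u => hub _ (le_max_right u 0)
  have hlb' : ∀ u, b0 ≤ beta' u := fun u => hlb _ (le_max_right u 0)
  have hconst' : ∀ u, c ≤ u → beta' u = b1 := by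
    intro u hu
    have h0u : (0:ℝ) ≤ u := le_trans hc0.le hu
    simp only [hbeta', max_eq_left h0u]
    exact hconst u hu
  have hcongr : ∀ v : ℝ, 0 ≤ v → (∫ u in (0:ℝ)..v, beta u) = ∫ u in (0:ℝ)..v, beta' u := by
    intro v hv
    apply intervalIntegral.integral_congr
    intro u hu
    rw [Set.uIcc_of_le hv] at hu
    simp only [hbeta', max_eq_left hu.1]
  have hint' : ∀ x y : ℝ, IntervalIntegrable beta' volume x y :=
    fun x y => hcont'.intervalIntegrable x y
  -- compute M
  have hMeq : M = ∫ u in (0:ℝ)..c, (beta' u - b1) := by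
    rw [hM]
    have h1 : ∀ u ∈ Set.Ioi (0:ℝ), beta u - b1 = (Set.Ioc 0 c).indicator (fun u => beta' u - b1) u := by
      intro u hu
      have hu0 : (0:ℝ) < u := hu
      by_cases h : u ≤ c
      · rw [Set.indicator_of_mem (Set.mem_Ioc.2 ⟨hu0, h⟩)]
        simp only [hbeta', max_eq_left hu0.le]
      · rw [Set.indicator_of_notMem (by simp [Set.mem_Ioc]; intro _; linarith)]
        rw [hconst u (by linarith)]; ring
    rw [setIntegral_congr_fun measurableSet_Ioi h1, setIntegral_indicator measurableSet_Ioc,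
      Set.inter_eq_right.2 (fun u hu => Set.mem_Ioi.2 hu.1),
      ← intervalIntegral.integral_of_le hc0.le]
  have hnegM : (∫ u in (0:ℝ)..c, (b1 - beta' u)) = -M := by
    rw [hMeq, ← intervalIntegral.integral_neg]
    congr 1; ext u; ring
  have hMlt : M < 0 := by
    have h0 : 0 ≤ ∫ u in (0:ℝ)..c, (b1 - beta' u) :=
      intervalIntegral.integral_nonneg hc0.le (fun u _ => by linarith [hub' u])
    rcases lt_or_eq_of_le (show M ≤ 0 by linarith) with h | h
    · exact h
    · exact absurd h hMne
  have habsM : |M| < b1 * c := by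
    rw [abs_of_neg hMlt]
    rw [← hnegM]
    calc (∫ u in (0:ℝ)..c, (b1 - beta' u)) ≤ ∫ _u in (0:ℝ)..c, (b1 - b0) := by
          apply intervalIntegral.integral_mono_on hc0.le
            (intervalIntegrable_const.sub (hint' 0 c)) intervalIntegrable_const
          intro u _; linarith [hlb' u]
      _ = (b1 - b0) * c := by simp; ring
      _ < b1 * c := by nlinarith
  -- RHS
  have hcL : c ≤ L ^ 2 / 8 := by nlinarith
  have hRHS : (∫ u in (0:ℝ)..(L ^ 2 / 8), beta u) = M + b1 * (L ^ 2 / 8) := by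
    rw [hcongr _ (by positivity)]
    have hsplit : (∫ u in (0:ℝ)..c, beta' u) + (∫ u in c..(L ^ 2 / 8), beta' u)
        = ∫ u in (0:ℝ)..(L ^ 2 / 8), beta' u :=
      intervalIntegral.integral_add_adjacent_intervals (hint' 0 c) (hint' c _)
    have h2 : (∫ u in c..(L ^ 2 / 8), beta' u) = b1 * (L ^ 2 / 8 - c) := by
      rw [intervalIntegral.integral_congr (g := fun _ => b1) ?_]
      · simp [mul_comm]
      · intro u hu
        rw [Set.uIcc_of_le hcL] at hu
        exact hconst' u hu.1
    have h1 : (∫ u in (0:ℝ)..c, beta' u) = M + b1 * c := by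
      rw [hMeq, intervalIntegral.integral_sub (hint' 0 c) intervalIntegrable_const]
      simp; ring
    rw [← hsplit, h1, h2]; ring
  -- bounds W ≤ U
  set W : ℝ := (L - a) ^ 2 / 2 with hW
  set t : ℝ := Real.sqrt (1 - N) with ht
  set U : ℝ := L ^ 2 / 8 * (1 + t) ^ 2 with hU
  have hN0 : 0 < N := by
    rw [hN]
    have : 0 < |M| := abs_pos.2 hMne
    positivity
  have hNlt : N * L ^ 2 < 4 * a ^ 2 := by
    rw [hN, div_mul_eq_mul_div, div_lt_iff₀ (by positivity)]
    have h := mul_lt_mul_of_pos_right habsM (show (0:ℝ) < L ^ 2 by positivity)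
    rw [hc] at h
    nlinarith
  have hN1 : N < 1 := by nlinarith
  have ht0 : 0 ≤ t := Real.sqrt_nonneg _
  have ht2 : t ^ 2 = 1 - N := Real.sq_sqrt (by linarith)
  have ht1 : t ≤ 1 := Real.sqrt_le_one.2 (by linarith)
  have htge : (L - 2 * a) / L ≤ t := by
    have hbase : 0 ≤ (L - 2 * a) / L := div_nonneg (by linarith) hL0.le
    have h2 : ((L - 2 * a) / L) ^ 2 ≤ 1 - N := by
      rw [div_pow, div_le_iff₀ (by positivity)]
      nlinarith
    calc (L - 2 * a) / L = Real.sqrt (((L - 2 * a) / L) ^ 2) := (Real.sqrt_sq hbase).symm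
      _ ≤ t := Real.sqrt_le_sqrt h2
  have hLt : L - 2 * a ≤ L * t := by
    have h := mul_le_mul_of_nonneg_left htge hL0.le
    rwa [mul_comm L ((L - 2 * a) / L), div_mul_cancel₀ _ hL0.ne'] at h
  have hWU : W ≤ U := by
    have h2 : (2 * (L - a)) * (2 * (L - a)) ≤ (L * (1 + t)) * (L * (1 + t)) :=
      mul_self_le_mul_self (by linarith) (by nlinarith)
    rw [hW, hU]; nlinarith
  have hW0 : 0 < W := by
    rw [hW]
    have : 0 < L - a := by nlinarith
    positivity
  have hUle : U ≤ L ^ 2 / 2 := by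
    rw [hU]
    nlinarith [sq_nonneg L]
  -- LHS bound
  have hLHS : (∫ v in W..U, (1 / v) * ∫ u in (0:ℝ)..v, beta u) ≤ b1 * (U - W) := by
    have hcg : ∀ v ∈ Set.uIcc W U, (1 / v) * (∫ u in (0:ℝ)..v, beta u)
        = (1 / v) * ∫ u in (0:ℝ)..v, beta' u := by
      intro v hv
      rw [Set.uIcc_of_le hWU] at hv
      rw [hcongr v (le_trans hW0.le hv.1)]
    rw [intervalIntegral.integral_congr hcg]
    have hprim : Continuous fun v => ∫ u in (0:ℝ)..v, beta' u :=
      intervalIntegral.continuous_primitive hint' 0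
    have hgcont : ContinuousOn (fun v => (1 / v) * ∫ u in (0:ℝ)..v, beta' u) (Set.Icc W U) := by
      apply ContinuousOn.mul ?_ hprim.continuousOn
      apply ContinuousOn.div continuousOn_const continuousOn_id
      intro v hv
      exact ne_of_gt (lt_of_lt_of_le hW0 hv.1)
    calc (∫ v in W..U, (1 / v) * ∫ u in (0:ℝ)..v, beta' u)
        ≤ ∫ _v in W..U, b1 := by
          apply intervalIntegral.integral_mono_on hWU
            (ContinuousOn.intervalIntegrable (by rw [Set.uIcc_of_le hWU]; exact hgcont))
            intervalIntegrable_const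
          intro v hv
          have hv0 : 0 < v := lt_of_lt_of_le hW0 hv.1
          have hupper : (∫ u in (0:ℝ)..v, beta' u) ≤ b1 * v := by
            calc (∫ u in (0:ℝ)..v, beta' u) ≤ ∫ _u in (0:ℝ)..v, b1 := by
                  apply intervalIntegral.integral_mono_on hv0.le (hint' 0 v)
                    intervalIntegrable_const
                  intro u _; exact hub' u
              _ = b1 * v := by simp [mul_comm]
          rw [one_div, inv_mul_le_iff₀ hv0]
          linarith
      _ = b1 * (U - W) := by simp [mul_comm]
  -- conclude
  rw [hRHS]
  calc (∫ v in W..U, (1 / v) * ∫ u in (0:ℝ)..v, beta u) ≤ b1 * (U - W) := hLHS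
    _ < 2 * (M + b1 * (L ^ 2 / 8)) := by
        have h1 : b1 * (U - W) ≤ b1 * (L ^ 2 / 2 - W) := by nlinarith
        have h2 : -M < b1 * (a ^ 2 / 2) := by
          rw [abs_of_neg hMlt, hc] at habsM; linarith
        have hkey : 0 < L ^ 2 - 4 * L * a - 2 * a ^ 2 := by
          nlinarith [mul_pos (sub_pos.2 hLa)
            (show (0:ℝ) < L - (2 - Real.sqrt 6) * a by nlinarith)]
        rw [hW] at h1
        nlinarith [mul_pos hb1 hkey]
end

section
/- Let b1, L > 0, M <= 0 with |M| < b1 L^2 / 8, and define F(s1, s2) = (b1 L^2/4) * ( (c/2)(1 - z^2) - z - N log(1 - z) ) - |M| * log((1+s1)(1+s2)) for s1, s2 >= 0, where c = 1 + s1 + s2, N = 8|M|/(b1 L^2) in (0,1), and z = z_-(c) is the negative root of z^2 - ((c-1)/c) z + (N-1)/c = 0. Then the gradient of F satisfies ∂_{s_j} F(s) = (b1 L^2/8)(1 - z_-(c(s))^2) - |M|/(1 + s_j) for j = 1, 2; in particular, since z_-(1) = -sqrt(1-N), one has ∇F(0,0) = 0. -/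
theorem stmt_19 (b1 L M N : ℝ) (hb1 : 0 < b1) (hL : 0 < L) (hM : M ≤ 0)
    (hMlt : |M| < b1 * L ^ 2 / 8) (hN : N = 8 * |M| / (b1 * L ^ 2))
    (zm : ℝ → ℝ)
    (hzm_root : ∀ c, 1 ≤ c →
      (zm c) ^ 2 - ((c - 1) / c) * zm c + (N - 1) / c = 0 ∧ zm c < 0)
    (F : ℝ → ℝ → ℝ)
    (hF : ∀ s1 s2, 0 ≤ s1 → 0 ≤ s2 →
      F s1 s2 = b1 * L ^ 2 / 4 *
          ((1 + s1 + s2) / 2 * (1 - (zm (1 + s1 + s2)) ^ 2) - zm (1 + s1 + s2) -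
            N * Real.log (1 - zm (1 + s1 + s2))) -
        |M| * Real.log ((1 + s1) * (1 + s2))) :
    (∀ s1 s2 : ℝ, 0 ≤ s1 → 0 ≤ s2 →
        HasDerivWithinAt (fun t => F t s2)
          (b1 * L ^ 2 / 8 * (1 - (zm (1 + s1 + s2)) ^ 2) - |M| / (1 + s1)) (Set.Ici 0) s1 ∧
        HasDerivWithinAt (fun t => F s1 t)
          (b1 * L ^ 2 / 8 * (1 - (zm (1 + s1 + s2)) ^ 2) - |M| / (1 + s2)) (Set.Ici 0) s2) ∧
      zm 1 = -Real.sqrt (1 - N) ∧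
      b1 * L ^ 2 / 8 * (1 - (zm 1) ^ 2) - |M| / 1 = 0 := by
  have hbL : (0:ℝ) < b1 * L ^ 2 := by positivity
  have hN0 : 0 ≤ N := by rw [hN]; positivity
  have hN1 : N < 1 := by
    rw [hN, div_lt_one hbL]; linarith
  -- the explicit negative root
  set g : ℝ → ℝ := fun c => ((c - 1) - Real.sqrt ((c - 1) ^ 2 + 4 * c * (1 - N))) / (2 * c)
    with hgdef
  -- quadratic relation in cleared form
  have hq : ∀ c, 1 ≤ c → c * zm c ^ 2 - (c - 1) * zm c + (N - 1) = 0 := by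
    intro c hc
    have hc0 : (c:ℝ) ≠ 0 := by linarith
    have h := (hzm_root c hc).1
    field_simp at h
    linarith
  have hDpos : ∀ c, 1 ≤ c → 0 < (c - 1) ^ 2 + 4 * c * (1 - N) := by
    intro c hc
    nlinarith
  have hzg : ∀ c, 1 ≤ c → zm c = g c := by
    intro c hc
    have hcpos : (0:ℝ) < c := by linarith
    obtain ⟨-, hneg⟩ := hzm_root c hc
    have hD := hDpos c hc
    have hsq : (2 * c * zm c - (c - 1)) ^ 2 = (c - 1) ^ 2 + 4 * c * (1 - N) := by
      linear_combination 4*c * hq c hc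
    have hss : Real.sqrt ((c - 1) ^ 2 + 4 * c * (1 - N)) ^ 2
        = (c - 1) ^ 2 + 4 * c * (1 - N) := Real.sq_sqrt hD.le
    have hfac : (2 * c * zm c - (c - 1) - Real.sqrt ((c - 1) ^ 2 + 4 * c * (1 - N))) *
        (2 * c * zm c - (c - 1) + Real.sqrt ((c - 1) ^ 2 + 4 * c * (1 - N))) = 0 := by
      linear_combination hsq - hss
    have hspos : 0 < Real.sqrt ((c - 1) ^ 2 + 4 * c * (1 - N)) := Real.sqrt_pos.2 hD
    have hx : 2 * c * zm c - (c - 1) = -Real.sqrt ((c - 1) ^ 2 + 4 * c * (1 - N)) := by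
      rcases mul_eq_zero.1 hfac with h | h
      · exfalso
        nlinarith
      · linarith
    rw [hgdef]
    show zm c = ((c - 1) - Real.sqrt ((c - 1) ^ 2 + 4 * c * (1 - N))) / (2 * c)
    rw [eq_div_iff (by positivity)]
    linarith
  -- key derivative lemma
  have key : ∀ a b : ℝ, 0 ≤ a → 0 ≤ b →
      HasDerivWithinAt (fun t => F t b)
        (b1 * L ^ 2 / 8 * (1 - (zm (1 + a + b)) ^ 2) - |M| / (1 + a)) (Set.Ici 0) a := by
    intro a b ha hb
    have hc0 : (1:ℝ) ≤ 1 + a + b := by linarith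
    have hc0pos : (0:ℝ) < 1 + a + b := by linarith
    have hD := hDpos _ hc0
    -- differentiability of g at c0
    have hDder : HasDerivAt (fun c : ℝ => (c - 1) ^ 2 + 4 * c * (1 - N))
        (2 * ((1 + a + b) - 1) + 4 * (1 - N)) (1 + a + b) := by
      have h1 : HasDerivAt (fun c : ℝ => (c - 1) ^ 2) (2 * ((1 + a + b) - 1)) (1 + a + b) := by
        simpa [Function.comp_def] using ((hasDerivAt_id (1 + a + b)).sub_const 1).fun_pow 2
      have h2 : HasDerivAt (fun c : ℝ => 4 * c * (1 - N)) (4 * (1 - N)) (1 + a + b) := by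
        simpa using (((hasDerivAt_id (1 + a + b)).const_mul 4).mul_const (1 - N))
      exact h1.add h2
    have hsder : HasDerivAt (fun c : ℝ => Real.sqrt ((c - 1) ^ 2 + 4 * c * (1 - N)))
        (1 / (2 * Real.sqrt (((1 + a + b) - 1) ^ 2 + 4 * (1 + a + b) * (1 - N))) *
          (2 * ((1 + a + b) - 1) + 4 * (1 - N))) (1 + a + b) := by
      have := (Real.hasDerivAt_sqrt hD.ne').comp (1 + a + b) hDder
      simpa [Function.comp_def] using this
    have hgdiff : DifferentiableAt ℝ g (1 + a + b) := by
      rw [hgdef]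
      apply DifferentiableAt.div
      · exact (differentiableAt_id.sub_const 1).sub hsder.differentiableAt
      · exact differentiableAt_id.const_mul 2
      · positivity
    set zd := deriv g (1 + a + b) with hzddef
    have hz : HasDerivAt g zd (1 + a + b) := hgdiff.hasDerivAt
    set z := g (1 + a + b) with hzdef
    have hzzm : zm (1 + a + b) = z := hzg _ hc0
    have hzneg : z < 0 := hzzm ▸ (hzm_root _ hc0).2
    have h1z : (0:ℝ) < 1 - z := by linarith
    have hq0 : (1 + a + b) * z ^ 2 - ((1 + a + b) - 1) * z + (N - 1) = 0 := by
      have := hq _ hc0; rw [hzzm] at this; exact this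
    -- derivative of t ↦ g (1 + t + b)
    have hψ : HasDerivAt (fun t : ℝ => 1 + t + b) 1 a := by
      simpa using ((hasDerivAt_id a).const_add 1).add_const b
    have hZ : HasDerivAt (fun t => g (1 + t + b)) zd a := by
      simpa [Function.comp_def] using hz.comp a hψ
    have hZ2 : HasDerivAt (fun t => 1 - g (1 + t + b) ^ 2) (-(2 * z * zd)) a := by
      have := ((hZ.pow 2).const_sub 1)
      simpa [mul_comm, mul_assoc, mul_left_comm] using this
    have hA : HasDerivAt (fun t => (1 + t + b) / 2 * (1 - g (1 + t + b) ^ 2))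
        ((1/2) * (1 - z ^ 2) + (1 + a + b) / 2 * (-(2 * z * zd))) a := by
      have := (hψ.div_const 2).fun_mul hZ2
      simpa [← hzdef] using this
    have hlog : HasDerivAt (fun t => Real.log (1 - g (1 + t + b))) ((1 - z)⁻¹ * (-zd)) a := by
      have h1 : HasDerivAt (fun t => 1 - g (1 + t + b)) (-zd) a := hZ.const_sub 1
      have := (Real.hasDerivAt_log h1z.ne').comp a h1
      simpa [Function.comp_def] using this
    have hlog1 : HasDerivAt (fun t : ℝ => Real.log (1 + t)) (1 + a)⁻¹ a := by
      have h1 : HasDerivAt (fun t : ℝ => 1 + t) 1 a := by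
        simpa using (hasDerivAt_id a).const_add 1
      have := (Real.hasDerivAt_log (by linarith : (1:ℝ) + a ≠ 0)).comp a h1
      simpa [Function.comp_def] using this
    have hG : HasDerivAt (fun t => b1 * L ^ 2 / 4 *
          ((1 + t + b) / 2 * (1 - (g (1 + t + b)) ^ 2) - g (1 + t + b) -
            N * Real.log (1 - g (1 + t + b))) -
          |M| * Real.log (1 + t) - |M| * Real.log (1 + b))
        (b1 * L ^ 2 / 4 * ((1/2) * (1 - z ^ 2) + (1 + a + b) / 2 * (-(2 * z * zd)) - zd -
            N * ((1 - z)⁻¹ * (-zd))) - |M| * (1 + a)⁻¹) a := by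
      exact ((((hA.sub hZ).sub (hlog.const_mul N)).const_mul (b1 * L ^ 2 / 4)).sub
        (hlog1.const_mul |M|)).sub_const (|M| * Real.log (1 + b))
    -- simplify the derivative value
    have hNz : N * (1 - z)⁻¹ = (1 + a + b) * z + 1 := by
      rw [eq_comm, ← sub_eq_zero]
      field_simp
      linear_combination -hq0
    have hval : b1 * L ^ 2 / 4 * ((1/2) * (1 - z ^ 2) + (1 + a + b) / 2 * (-(2 * z * zd)) - zd -
            N * ((1 - z)⁻¹ * (-zd))) - |M| * (1 + a)⁻¹
        = b1 * L ^ 2 / 8 * (1 - (zm (1 + a + b)) ^ 2) - |M| / (1 + a) := by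
      rw [hzzm, div_eq_mul_inv (|M|)]
      linear_combination (b1 * L ^ 2 / 4 * zd) * hNz
    rw [← hval]
    apply hG.hasDerivWithinAt.congr
    · intro t ht
      have ht0 : (0:ℝ) ≤ t := ht
      rw [hF t b ht0 hb, Real.log_mul (by linarith) (by linarith),
        hzg (1 + t + b) (by linarith)]
      ring
    · rw [hF a b ha hb, Real.log_mul (by linarith) (by linarith),
        hzg (1 + a + b) (by linarith)]
      ring
  -- zm 1
  have hz1 : zm 1 = -Real.sqrt (1 - N) := by
    have h1N : (0:ℝ) ≤ 1 - N := by linarith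
    have hq1 := hq 1 le_rfl
    have hneg := (hzm_root 1 le_rfl).2
    have hss : Real.sqrt (1 - N) ^ 2 = 1 - N := Real.sq_sqrt h1N
    have hfac : (zm 1 - Real.sqrt (1 - N)) * (zm 1 + Real.sqrt (1 - N)) = 0 := by
      linear_combination hq1 - hss
    have hsnn : 0 ≤ Real.sqrt (1 - N) := Real.sqrt_nonneg _
    rcases mul_eq_zero.1 hfac with h | h
    · exfalso; nlinarith
    · linarith
  refine ⟨?_, hz1, ?_⟩
  · intro s1 s2 h1 h2
    refine ⟨key s1 s2 h1 h2, ?_⟩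
    have h12 : (1:ℝ) + s2 + s1 = 1 + s1 + s2 := by ring
    have hk := key s2 s1 h2 h1
    rw [h12] at hk
    apply hk.congr
    · intro t ht
      have ht0 : (0:ℝ) ≤ t := ht
      rw [hF s1 t h1 ht0, hF t s1 ht0 h1, show (1:ℝ) + s1 + t = 1 + t + s1 from by ring,
        mul_comm (1 + s1) (1 + t)]
    · rw [hF s1 s2 h1 h2, hF s2 s1 h2 h1, show (1:ℝ) + s1 + s2 = 1 + s2 + s1 from by ring,
        mul_comm (1 + s1) (1 + s2)]
  · rw [hz1]
    have h1N : (0:ℝ) ≤ 1 - N := by linarith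
    rw [neg_pow, Real.sq_sqrt h1N, hN]
    field_simp
    ring
end
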